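/- Let p be an odd prime, let a, b ∈ ℂ_p with R = |a − b|_p > 0, and let f(x) = Σ_{n≥0} c_n (x − b)^n be holomorphic on 𝒜(a,b) with controlled coefficients of order β < 1/2. Let f′ denote the termwise derivative f′(x) = Σ_{n≥0} (n+1) c_{n+1} (x − b)^n. Then for every interlocked family Φ of path sequences, ∫_{𝒜(a,b),Φ} f′(x) dx = 0. -/

import Mathlib

/-!
Throughout, `K` plays the role of `ℂ_p`, the completion of an algebraic closure of `ℚ_p`:
it is a complete, algebraically closed, nonarchimedean (ultrametric) normed field equipped
with an isometric `ℚ_[p]`-algebra structure (hypothesis `hKext`).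
-/

open scoped BigOperators

/-- A *path sequence*: a function defined (positive-valued and strictly increasing)
for `k ≥ k₀`, for some positive integer `k₀`. -/
structure PathSeq where
  toFun : ℕ → ℕ
  k₀ : ℕ
  k₀_pos : 0 < k₀
  pos : ∀ k, k₀ ≤ k → 0 < toFun k
  mono : ∀ k l, k₀ ≤ k → k < l → toFun k < toFun l

/-- The Riemann-type sum `A_{f,φ}(k)` (with `N = φ(k)`):
`p^{-N} ∑_ζ (b - a) ζ · f (a + (b - a) ζ)`, `ζ` ranging over the `p^N`-th roots of unity. -/
noncomputable def Asum (p : ℕ) (K : Type*) [NormedField K] (a b : K) (f : K → K) (N : ℕ) : K :=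
  ((p : K) ^ N)⁻¹ *
    ∑ ζ ∈ Polynomial.nthRootsFinset (p ^ N) (1 : K), (b - a) * ζ * f (a + (b - a) * ζ)

/-- `ψ` is, for `k ≥ k₀`, a subsequence of the path sequence `φ`. -/
def SubseqFrom (ψ φ : PathSeq) (k₀ : ℕ) : Prop :=
  ∃ σ : ℕ → ℕ, (∀ k l, k₀ ≤ k → k < l → σ k < σ l) ∧
    ∀ k, k₀ ≤ k → φ.k₀ ≤ σ k ∧ ψ.toFun k = φ.toFun (σ k)

/-- An *interlocked* family of path sequences: nonempty, and any two members have a common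
member-subsequence. -/
def Interlocked (Φ : Set PathSeq) : Prop :=
  Φ.Nonempty ∧ ∀ φ₁ ∈ Φ, ∀ φ₂ ∈ Φ, ∃ φ₃ ∈ Φ, ∃ k₀ : ℕ, 0 < k₀ ∧
    SubseqFrom φ₃ φ₁ k₀ ∧ SubseqFrom φ₃ φ₂ k₀

/-- `∫_{𝒜(a,b),Φ} f(x) dx = L`: for every `ε > 0` there are `φ ∈ Φ` and `M` such that
`|A_{f,φ}(k) - L| < ε` for all `k > M` (in the domain of `φ`). -/
def HasIntegral (p : ℕ) (K : Type*) [NormedField K] (a b : K) (f : K → K)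
    (Φ : Set PathSeq) (L : K) : Prop :=
  ∀ ε : ℝ, 0 < ε → ∃ φ ∈ Φ, ∃ M : ℕ, φ.k₀ ≤ M ∧
    ∀ k, M < k → ‖Asum p K a b f (φ.toFun k) - L‖ < ε

/-- `f` is holomorphic on `S`: its values on `S` are given by the single power series with
coefficients `c`, centered at `b`, convergent on `S`. -/
def HolomorphicOn' (K : Type*) [NormedField K] (c : ℕ → K) (b : K) (f : K → K)
    (S : Set K) : Prop :=
  ∀ x ∈ S, Summable (fun n : ℕ => c n * (x - b) ^ n) ∧ f x = ∑' n : ℕ, c n * (x - b) ^ n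

/-- The arc `𝒜(a,b)`: the open disc of radius `R = |a - b|` around `b`. -/
def arc (K : Type*) [NormedField K] (a b : K) : Set K := {x : K | ‖x - b‖ < ‖a - b‖}

/-- `c` are controlled coefficients of order `β` (for the radius `R`). -/
def Controlled (K : Type*) [NormedField K] (c : ℕ → K) (R β : ℝ) : Prop :=
  ∃ M n₀ : ℝ, 0 < n₀ ∧ ∀ n : ℕ, n₀ < (n : ℝ) → ‖c n‖ * R ^ n < M * (n : ℝ) ^ β

/-- The interlocked family `Φ_α = {k ↦ α + λ k : λ ∈ ℤ⁺}`. -/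
def PhiAlpha (α : ℕ) : Set PathSeq :=
  {φ : PathSeq | ∃ lam : ℕ, 0 < lam ∧ ∀ k : ℕ, φ.toFun k = α + lam * k}

/-!
Write `x - b = (a - b)(1 - ζ)` and expand `f'` termwise: `p^N A_{f',N}` becomes
`∑ₙ (b - a)(n + 1) c_{n+1} (a - b)^n Sₙ` with `Sₙ = ∑_{ζ^{p^N} = 1} ζ (1 - ζ)^n` (`rootMoment`).
Summing powers of roots of unity, `Sₙ = 0` for `n + 1 < p^N` and `|(n + 1) Sₙ| ≤ |p^N|²`;
and since `|ζ - 1|^{p^N} ≤ |p|` for every `p^N`-th root of unity, `|Sₙ| ≤ p^{-⌊n / p^N⌋}`.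
With `|c_{n+1}| R^{n+1} = O(n^β)`, the terms with `n + 1 ≤ p^{2N}` contribute `O(p^{N(2β - 1)})`
to `A_{f',N}` and the remaining ones `O(p^{3N} / p^{p^N})`. Both tend to `0`, so `A_{f',N} → 0`,
hence along every path sequence.
-/

open Polynomial Filter Topology IsUltrametricDist

section RootsOfUnity

variable {K : Type*} [NormedField K]

lemma norm_eq_one_of_pow_eq_one {ζ : K} {m : ℕ} (h : ζ ^ m = 1) (hm : m ≠ 0) : ‖ζ‖ = 1 :=
  (pow_eq_one_iff_of_nonneg (norm_nonneg ζ) hm).mp (by rw [← norm_pow, h, norm_one])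

variable [IsUltrametricDist K]

lemma norm_sub_one_le_one {ζ : K} (hζ : ‖ζ‖ ≤ 1) : ‖ζ - 1‖ ≤ 1 :=
  sub_eq_add_neg ζ 1 ▸ (norm_add_le_max ζ (-1)).trans (max_le hζ (by rw [norm_neg, norm_one]))

lemma norm_pow_prime_le_max {p : ℕ} (hp : p.Prime) {u : K} (hu : ‖u‖ ≤ 1) :
    ‖u‖ ^ p ≤ max ‖(u + 1) ^ p - 1‖ ‖(p : K)‖ := by
  set s := ∑ k ∈ Finset.Ioo 0 p, u ^ k * 1 ^ (p - k) * ((p.choose k / p : ℕ) : K)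
  have hs : ‖s‖ ≤ 1 := norm_sum_le_of_forall_le_of_nonneg zero_le_one fun k _ => by
    rw [one_pow, mul_one, norm_mul, norm_pow]
    exact mul_le_one₀ (pow_le_one₀ (norm_nonneg u) hu) (norm_nonneg _) (norm_natCast_le_one K _)
  have hu_pow : u ^ p = ((u + 1) ^ p - 1) + -(p * s) := by
    rw [add_pow_prime_eq' hp, one_pow]; ring
  rw [← norm_pow, hu_pow]
  refine (norm_add_le_max _ _).trans (max_le_max le_rfl ?_)
  rw [norm_neg, norm_mul]
  exact mul_le_of_le_one_right (norm_nonneg _) hs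

lemma norm_sub_one_pow_le_of_pow_prime_pow_eq_one {p : ℕ} (hp : p.Prime) :
    ∀ (N : ℕ) {ζ : K}, ζ ^ p ^ N = 1 → ‖ζ - 1‖ ^ p ^ N ≤ ‖(p : K)‖
  | 0, ζ, h => by simp_all
  | N + 1, ζ, h => by
    have hζ : ‖ζ‖ = 1 := norm_eq_one_of_pow_eq_one h (pow_ne_zero _ hp.ne_zero)
    have ih := norm_sub_one_pow_le_of_pow_prime_pow_eq_one hp N (ζ := ζ ^ p)
      (by rw [← pow_mul, ← pow_succ']; exact h)
    rw [pow_succ', pow_mul]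
    rcases le_max_iff.mp (sub_add_cancel ζ 1 ▸ norm_pow_prime_le_max hp (norm_sub_one_le_one hζ.le))
      with hle | hle
    · exact (pow_le_pow_left₀ (by positivity) hle _).trans ih
    · exact (pow_le_pow_left₀ (by positivity) hle _).trans
        (pow_le_of_le_one (norm_nonneg _) (norm_natCast_le_one K p) (pow_ne_zero _ hp.ne_zero))

end RootsOfUnity

noncomputable def rootMoment (K : Type*) [Field K] (m n : ℕ) : K :=
  ∑ ζ ∈ nthRootsFinset m (1 : K), ζ * (1 - ζ) ^ n

section RootMoment

variable {K : Type*}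

section Field

variable [Field K] {m : ℕ} {ζ₀ : K}

lemma IsPrimitiveRoot.nthRootsFinset_eq_image [DecidableEq K] (h : IsPrimitiveRoot ζ₀ m)
    (hm : 0 < m) : nthRootsFinset m (1 : K) = (Finset.range m).image (ζ₀ ^ ·) := by
  refine (Finset.eq_of_subset_of_card_le (fun x hx => ?_) ?_).symm
  · obtain ⟨k, -, rfl⟩ := Finset.mem_image.mp hx
    rw [Polynomial.mem_nthRootsFinset hm, ← pow_mul, mul_comm, pow_mul, h.pow_eq_one, one_pow]
  · rw [h.card_nthRootsFinset, Finset.card_image_of_injOn fun i hi j hj =>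
      h.pow_inj (Finset.mem_range.mp hi) (Finset.mem_range.mp hj), Finset.card_range]

lemma IsPrimitiveRoot.sum_nthRootsFinset_pow (h : IsPrimitiveRoot ζ₀ m) (hm : 0 < m) (i : ℕ) :
    ∑ ζ ∈ nthRootsFinset m (1 : K), ζ ^ i = if m ∣ i then (m : K) else 0 := by
  classical
  rw [h.nthRootsFinset_eq_image hm, Finset.sum_image fun a ha b hb =>
    h.pow_inj (Finset.mem_range.mp ha) (Finset.mem_range.mp hb)]
  simp_rw [← pow_mul, mul_comm _ i, pow_mul]
  split_ifs with hdvd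
  · simp [(h.pow_eq_one_iff_dvd i).mpr hdvd]
  · have hne : ζ₀ ^ i ≠ 1 := fun h1 => hdvd ((h.pow_eq_one_iff_dvd i).mp h1)
    rw [geom_sum_eq hne, ← pow_mul, mul_comm, pow_mul, h.pow_eq_one, one_pow, sub_self,
      zero_div]

lemma IsPrimitiveRoot.rootMoment_eq (h : IsPrimitiveRoot ζ₀ m) (hm : 0 < m) (n : ℕ) :
    rootMoment K m n =
      m * ∑ j ∈ (Finset.range (n + 1)).filter (m ∣ · + 1), (-1) ^ j * (n.choose j : K) := by
  have hexpand : ∀ ζ : K, ζ * (1 - ζ) ^ n =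
      ∑ j ∈ Finset.range (n + 1), (-1) ^ j * (n.choose j : K) * ζ ^ (j + 1) := fun ζ => by
    rw [sub_eq_neg_add, add_pow, Finset.mul_sum]
    refine Finset.sum_congr rfl fun j _ => ?_
    rw [neg_pow]
    ring
  simp_rw [rootMoment, hexpand]
  rw [Finset.sum_comm]
  simp_rw [← Finset.mul_sum, h.sum_nthRootsFinset_pow hm, mul_ite, mul_zero]
  rw [← Finset.sum_filter, Finset.mul_sum]
  exact Finset.sum_congr rfl fun j _ => mul_comm _ _

lemma IsPrimitiveRoot.rootMoment_eq_zero (h : IsPrimitiveRoot ζ₀ m) {n : ℕ} (hn : n + 1 < m) :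
    rootMoment K m n = 0 := by
  rw [h.rootMoment_eq (by omega), Finset.filter_false_of_mem, Finset.sum_empty, mul_zero]
  intro j hj hdvd
  have := Nat.le_of_dvd j.succ_pos hdvd
  have := Finset.mem_range.mp hj
  omega

end Field

variable [NormedField K] [IsUltrametricDist K]

/-- The factor `n + 1` turns the binomial coefficients in `rootMoment_eq` into multiples of
`m`, since `(n + 1) C(n, j) = (j + 1) C(n + 1, j + 1)` and `m ∣ j + 1`. -/
lemma IsPrimitiveRoot.norm_mul_rootMoment_le {m : ℕ} {ζ₀ : K} (h : IsPrimitiveRoot ζ₀ m)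
    (hm : 0 < m) (n : ℕ) : ‖((n : K) + 1) * rootMoment K m n‖ ≤ ‖(m : K)‖ ^ 2 := by
  set F := (Finset.range (n + 1)).filter (m ∣ · + 1)
  have hrewrite : ((n : K) + 1) * rootMoment K m n =
      (m : K) ^ 2 * ∑ j ∈ F, (-1) ^ j * (((j + 1) / m : ℕ) : K) * ((n + 1).choose (j + 1) : K) := by
    rw [h.rootMoment_eq hm, Finset.mul_sum, Finset.mul_sum, Finset.mul_sum]
    refine Finset.sum_congr rfl fun j hj => ?_
    have hnat : (n + 1) * n.choose j * m = m ^ 2 * ((j + 1) / m) * (n + 1).choose (j + 1) := by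
      obtain ⟨q, hq⟩ := (Finset.mem_filter.mp hj).2
      rw [Nat.add_one_mul_choose_eq, hq, Nat.mul_div_cancel_left q hm]
      ring
    have hcast := congrArg (fun t : ℕ => (t : K)) hnat
    push_cast at hcast
    linear_combination (-1 : K) ^ j * hcast
  rw [hrewrite, norm_mul, norm_pow]
  refine mul_le_of_le_one_right (by positivity)
    (norm_sum_le_of_forall_le_of_nonneg zero_le_one fun j _ => ?_)
  rw [norm_mul, norm_mul, norm_pow, norm_neg, norm_one, one_pow, one_mul]
  exact mul_le_one₀ (norm_natCast_le_one K _) (norm_nonneg _) (norm_natCast_le_one K _)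

lemma norm_rootMoment_le {p : ℕ} (hp : p.Prime) (N n : ℕ) :
    ‖rootMoment K (p ^ N) n‖ ≤ ‖(p : K)‖ ^ (n / p ^ N) := by
  have hm : 0 < p ^ N := pow_pos hp.pos N
  refine norm_sum_le_of_forall_le_of_nonneg (by positivity) fun ζ hζ => ?_
  have hζm : ζ ^ p ^ N = 1 := (mem_nthRootsFinset hm 1).mp hζ
  have hu : ‖1 - ζ‖ ≤ 1 := norm_sub_rev ζ 1 ▸
    norm_sub_one_le_one (norm_eq_one_of_pow_eq_one hζm hm.ne').le
  rw [norm_mul, norm_eq_one_of_pow_eq_one hζm hm.ne', one_mul, norm_pow]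
  calc ‖1 - ζ‖ ^ n ≤ ‖1 - ζ‖ ^ (p ^ N * (n / p ^ N)) :=
        pow_le_pow_of_le_one (norm_nonneg _) hu (Nat.mul_div_le n _)
    _ = (‖ζ - 1‖ ^ p ^ N) ^ (n / p ^ N) := by rw [pow_mul, norm_sub_rev]
    _ ≤ ‖(p : K)‖ ^ (n / p ^ N) := pow_le_pow_left₀ (by positivity)
        (norm_sub_one_pow_le_of_pow_prime_pow_eq_one hp N hζm) _

end RootMoment

section PowerSeries

variable {K : Type*} [NormedField K]

lemma Controlled.exists_bound {c : ℕ → K} {R β : ℝ} (hc : Controlled K c R β) (hR : 0 ≤ R) :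
    ∃ M n₀ : ℝ, 0 ≤ M ∧ ∀ n : ℕ, n₀ < n → ‖c n‖ * R ^ n ≤ M * (n : ℝ) ^ max β 0 := by
  obtain ⟨M, n₀, hn₀, hcM⟩ := hc
  have hn₁ : n₀ < (⌈n₀⌉₊ + 1 : ℕ) := by push_cast; linarith [Nat.le_ceil n₀]
  have hM : 0 ≤ M := by
    have := hcM _ hn₁
    by_contra! hneg
    have : M * ((⌈n₀⌉₊ + 1 : ℕ) : ℝ) ^ β < 0 := mul_neg_of_neg_of_pos hneg (by positivity)
    linarith [mul_nonneg (norm_nonneg (c (⌈n₀⌉₊ + 1))) (pow_nonneg hR (⌈n₀⌉₊ + 1))]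
  refine ⟨M, n₀, hM, fun n hn => (hcM n hn).le.trans ?_⟩
  have hn1 : (1 : ℝ) ≤ n := by
    exact_mod_cast Nat.one_le_iff_ne_zero.mpr (by rintro rfl; push_cast at hn; linarith)
  exact mul_le_mul_of_nonneg_left (Real.rpow_le_rpow_of_exponent_le hn1 (le_max_left _ _)) hM

lemma summable_derivSeries [CompleteSpace K] [IsUltrametricDist K] {c : ℕ → K} {R M n₀ γ : ℝ}
    (hR : 0 < R) (hM : 0 ≤ M) (hγ : γ ≤ 1)
    (hc : ∀ n : ℕ, n₀ < n → ‖c n‖ * R ^ n ≤ M * (n : ℝ) ^ γ) {x : K} (hx : ‖x‖ < R) :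
    Summable fun n : ℕ => ((n : K) + 1) * c (n + 1) * x ^ n := by
  apply NonarchimedeanAddGroup.summable_of_tendsto_cofinite_zero
  rw [Nat.cofinite_eq_atTop]
  set u := ‖x‖ / R with hu
  have hu0 : 0 ≤ u := by positivity
  have hu1 : u < 1 := (div_lt_one hR).mpr hx
  have hlim : Tendsto (fun n : ℕ => M / R * ((n + 1) * u ^ n)) atTop (𝓝 0) := by
    simpa [add_mul] using ((tendsto_self_mul_const_pow_of_lt_one hu0 hu1).add
      (tendsto_pow_atTop_nhds_zero_of_lt_one hu0 hu1)).const_mul (M / R)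
  refine squeeze_zero_norm' ?_ hlim
  filter_upwards [eventually_ge_atTop ⌈n₀⌉₊] with n hn
  have hcn := (hc (n + 1) (by push_cast; linarith [(Nat.ceil_le.mp hn : n₀ ≤ n)])).trans
    (mul_le_mul_of_nonneg_left
      (Real.rpow_le_self_of_one_le (by exact_mod_cast Nat.le_add_left 1 n) hγ) hM)
  calc ‖((n : K) + 1) * c (n + 1) * x ^ n‖ ≤ ‖c (n + 1)‖ * ‖x‖ ^ n := by
        rw [norm_mul, norm_mul, norm_pow, mul_assoc]
        exact mul_le_of_le_one_left (by positivity)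
          (by exact_mod_cast norm_natCast_le_one K (n + 1))
    _ = ‖c (n + 1)‖ * R ^ (n + 1) * (u ^ n / R) := by
        rw [hu, div_pow]
        field_simp
        ring
    _ ≤ M * ((n + 1 : ℕ) : ℝ) * (u ^ n / R) := by gcongr
    _ = M / R * ((n + 1) * u ^ n) := by push_cast; ring

lemma asum_tsum_eq {p : ℕ} (a b : K) (d : ℕ → K) (N : ℕ)
    (hd : ∀ ζ ∈ nthRootsFinset (p ^ N) (1 : K), Summable fun n => d n * ((a - b) * (1 - ζ)) ^ n) :
    Asum p K a b (fun x => ∑' n, d n * (x - b) ^ n) N =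
      ((p : K) ^ N)⁻¹ * ∑' n, (b - a) * d n * (a - b) ^ n * rootMoment K (p ^ N) n := by
  have hx : ∀ ζ : K, a + (b - a) * ζ - b = (a - b) * (1 - ζ) := fun ζ => by ring
  rw [Asum]
  congr 1
  simp_rw [hx, ← tsum_mul_left]
  rw [← Summable.tsum_finsetSum fun ζ hζ => (hd ζ hζ).mul_left _]
  congr 1
  funext n
  rw [rootMoment, Finset.mul_sum]
  exact Finset.sum_congr rfl fun ζ _ => by rw [mul_pow]; ring

end PowerSeries

lemma PathSeq.tendsto_atTop (φ : PathSeq) : Tendsto φ.toFun atTop atTop := by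
  have hgrow : ∀ k, φ.k₀ ≤ k → k - φ.k₀ ≤ φ.toFun k := fun k hk => by
    induction k, hk using Nat.le_induction with
    | base => simp
    | succ k hk ih => have := φ.mono k (k + 1) hk k.lt_succ_self; omega
  refine tendsto_atTop_mono' atTop ?_ (tendsto_sub_atTop_nat φ.k₀)
  filter_upwards [eventually_ge_atTop φ.k₀] with k hk using hgrow k hk

lemma hasIntegral_of_tendsto {p : ℕ} {K : Type*} [NormedField K] {a b : K} {f : K → K}
    {Φ : Set PathSeq} {L : K} (hΦ : Φ.Nonempty) (h : Tendsto (Asum p K a b f) atTop (𝓝 L)) :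
    HasIntegral p K a b f Φ L := by
  intro ε hε
  obtain ⟨φ, hφ⟩ := hΦ
  obtain ⟨k₁, hk₁⟩ := Metric.tendsto_atTop.mp (h.comp φ.tendsto_atTop) ε hε
  refine ⟨φ, hφ, max φ.k₀ k₁, le_max_left _ _, fun k hk => ?_⟩
  rw [← dist_eq_norm]
  exact hk₁ k (max_lt_iff.mp hk).2.le

lemma antitone_add_one_div_pow {P : ℝ} (hP : 2 ≤ P) :
    Antitone fun k : ℕ => ((k : ℝ) + 1) / P ^ k := by
  refine antitone_nat_of_succ_le fun k => ?_
  have hPk : 0 < P ^ k := by positivity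
  have hstep : (k : ℝ) + 1 + 1 ≤ (k + 1) * P := by nlinarith
  rw [div_le_div_iff₀ (by positivity) hPk, pow_succ]
  push_cast
  nlinarith

lemma add_one_div_pow_div_le {P : ℝ} (hP : 2 ≤ P) {m n : ℕ} (hm : 0 < m) (hn : m ^ 2 < n + 1) :
    ((n : ℝ) + 1) / P ^ (n / m) ≤ 2 * (m : ℝ) ^ 2 / P ^ m := by
  have hP0 : 0 < P := by linarith
  have hk : m ≤ n / m := (Nat.le_div_iff_mul_le hm).mpr (by rw [← sq]; omega)
  have hnk : (n : ℝ) + 1 ≤ m * ((n / m : ℕ) + 1) := by exact_mod_cast Nat.lt_mul_div_succ n hm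
  calc ((n : ℝ) + 1) / P ^ (n / m) ≤ m * ((n / m : ℕ) + 1) / P ^ (n / m) := by gcongr
    _ = m * ((((n / m : ℕ) : ℝ) + 1) / P ^ (n / m)) := mul_div_assoc _ _ _
    _ ≤ m * (((m : ℝ) + 1) / P ^ m) :=
        mul_le_mul_of_nonneg_left (antitone_add_one_div_pow hP hk) (by positivity)
    _ ≤ m * (2 * m / P ^ m) := by gcongr; linarith [(by exact_mod_cast hm : (1 : ℝ) ≤ m)]
    _ = 2 * (m : ℝ) ^ 2 / P ^ m := by ring

/-- The bound on `‖A_{f',N}‖` at `m = p ^ N`: the two terms come from the coefficients of index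
at most `m ^ 2` and from the tail. -/
noncomputable def asumBound (P M γ : ℝ) (m : ℕ) : ℝ :=
  M * ((m : ℝ) ^ (2 * γ) / m + 2 * (m : ℝ) ^ 3 / P ^ m)

lemma tendsto_asumBound {P M γ : ℝ} (hP : 1 < P) (hγ : γ < 1 / 2) :
    Tendsto (asumBound P M γ) atTop (𝓝 0) := by
  have hpow : Tendsto (fun m : ℕ => (m : ℝ) ^ (2 * γ) / m) atTop (𝓝 0) := by
    have := (tendsto_rpow_neg_atTop (by linarith : 0 < 1 - 2 * γ)).comp tendsto_natCast_atTop_atTop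
    refine this.congr' ?_
    filter_upwards [eventually_gt_atTop 0] with m hm
    rw [Function.comp_apply, neg_sub, Real.rpow_sub_one (by positivity)]
  have hexp := (tendsto_pow_const_div_const_pow_of_one_lt 3 hP).const_mul 2
  unfold asumBound
  simpa [mul_div_assoc] using (hpow.add hexp).const_mul M

section Estimates

variable {K : Type*} [NormedField K] [IsUltrametricDist K] {p : ℕ} {c : ℕ → K} {M n₀ γ : ℝ}

lemma norm_coeff_mul_rootMoment_le (hp : p.Prime) (hnormp : ‖(p : K)‖ = (p : ℝ)⁻¹) {N : ℕ} {ζ₀ : K}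
    (hζ₀ : IsPrimitiveRoot ζ₀ (p ^ N)) {R : ℝ} (hM : 0 ≤ M) (hγ0 : 0 ≤ γ) (hγ1 : γ ≤ 1)
    (hc : ∀ n : ℕ, n₀ < n → ‖c n‖ * R ^ n ≤ M * (n : ℝ) ^ γ) (hN : n₀ < p ^ N) (n : ℕ) :
    ‖c (n + 1)‖ * R ^ (n + 1) * ‖((n : K) + 1) * rootMoment K (p ^ N) n‖ ≤
      asumBound p M γ (p ^ N) / (p ^ N : ℕ) := by
  have hm : 0 < p ^ N := pow_pos hp.pos N
  set m := p ^ N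
  have hbound : asumBound p M γ m / m =
      M * ((m : ℝ) ^ (2 * γ) / (m : ℝ) ^ 2 + 2 * (m : ℝ) ^ 2 / (p : ℝ) ^ m) := by
    simp only [asumBound]
    field_simp
  rw [hbound]
  have hnormm : ‖(m : K)‖ = (m : ℝ)⁻¹ := by
    simp only [m, Nat.cast_pow, norm_pow, hnormp, inv_pow]
  rcases lt_or_ge (n + 1) m with hsmall | hlarge
  · rw [hζ₀.rootMoment_eq_zero hsmall, mul_zero, norm_zero, mul_zero]
    positivity
  have hcn := hc (n + 1) (hN.trans_le (by exact_mod_cast hlarge))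
  rcases le_or_gt (n + 1) (m ^ 2) with hmid | htail
  · refine le_trans ?_ (mul_le_mul_of_nonneg_left (le_add_of_nonneg_right (by positivity)) hM)
    have hs : ‖((n : K) + 1) * rootMoment K m n‖ ≤ ((m : ℝ) ^ 2)⁻¹ := by
      simpa [hnormm, inv_pow] using hζ₀.norm_mul_rootMoment_le hm n
    calc _ ≤ M * ((n + 1 : ℕ) : ℝ) ^ γ * ((m : ℝ) ^ 2)⁻¹ :=
          mul_le_mul hcn hs (norm_nonneg _) (by positivity)
      _ ≤ M * ((m : ℝ) ^ 2) ^ γ * ((m : ℝ) ^ 2)⁻¹ := by gcongr; exact_mod_cast hmid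
      _ = M * ((m : ℝ) ^ (2 * γ) / (m : ℝ) ^ 2) := by
          rw [Real.rpow_mul (by positivity), Real.rpow_two, div_eq_mul_inv, mul_assoc]
  · refine le_trans ?_ (mul_le_mul_of_nonneg_left (le_add_of_nonneg_left (by positivity)) hM)
    have hs : ‖((n : K) + 1) * rootMoment K m n‖ ≤ ((p : ℝ) ^ (n / m))⁻¹ := by
      rw [norm_mul, ← inv_pow, ← hnormp]
      refine mul_le_of_le_one_left (norm_nonneg _) ?_ |>.trans (norm_rootMoment_le hp N n)
      exact_mod_cast norm_natCast_le_one K (n + 1)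
    have hlin : ((n + 1 : ℕ) : ℝ) ^ γ ≤ (n + 1 : ℕ) :=
      Real.rpow_le_self_of_one_le (by exact_mod_cast Nat.le_add_left 1 n) hγ1
    calc _ ≤ M * ((n + 1 : ℕ) : ℝ) * ((p : ℝ) ^ (n / m))⁻¹ :=
          mul_le_mul (hcn.trans (mul_le_mul_of_nonneg_left hlin hM)) hs (norm_nonneg _)
            (by positivity)
      _ = M * (((n : ℝ) + 1) / (p : ℝ) ^ (n / m)) := by push_cast; ring
      _ ≤ M * (2 * (m : ℝ) ^ 2 / (p : ℝ) ^ m) := mul_le_mul_of_nonneg_left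
          (add_one_div_pow_div_le (by exact_mod_cast hp.two_le) hm htail) hM

lemma norm_asum_derivSeries_le [CompleteSpace K] (hp : p.Prime) (hnormp : ‖(p : K)‖ = (p : ℝ)⁻¹)
    {N : ℕ} {ζ₀ : K} (hζ₀ : IsPrimitiveRoot ζ₀ (p ^ N)) {a b : K} (hR : 0 < ‖a - b‖)
    (hM : 0 ≤ M) (hγ0 : 0 ≤ γ) (hγ1 : γ ≤ 1)
    (hc : ∀ n : ℕ, n₀ < n → ‖c n‖ * ‖a - b‖ ^ n ≤ M * (n : ℝ) ^ γ) (hN : n₀ < p ^ N) :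
    ‖Asum p K a b (fun x => ∑' n : ℕ, ((n : K) + 1) * c (n + 1) * (x - b) ^ n) N‖ ≤
      asumBound p M γ (p ^ N) := by
  have hm : 0 < p ^ N := pow_pos hp.pos N
  have hclose : ∀ ζ ∈ nthRootsFinset (p ^ N) (1 : K), ‖(a - b) * (1 - ζ)‖ < ‖a - b‖ := by
    intro ζ hζ
    have hpow := norm_sub_one_pow_le_of_pow_prime_pow_eq_one hp N ((mem_nthRootsFinset hm 1).mp hζ)
    have hlt : ‖1 - ζ‖ < 1 := by
      rw [norm_sub_rev, ← pow_lt_one_iff_of_nonneg (norm_nonneg _) hm.ne']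
      exact hpow.trans_lt (hnormp ▸ inv_lt_one_of_one_lt₀ (by exact_mod_cast hp.one_lt))
    rw [norm_mul]
    exact mul_lt_of_lt_one_right hR hlt
  rw [asum_tsum_eq a b (fun n => ((n : K) + 1) * c (n + 1)) N fun ζ hζ =>
    summable_derivSeries hR hM hγ1 hc (hclose ζ hζ)]
  rw [norm_mul, norm_inv, norm_pow, hnormp, inv_pow, inv_inv]
  have hterm : ∀ n : ℕ,
      ‖(b - a) * (((n : K) + 1) * c (n + 1)) * (a - b) ^ n * rootMoment K (p ^ N) n‖ ≤
        asumBound p M γ (p ^ N) / (p ^ N : ℕ) := fun n => by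
    refine le_of_eq_of_le ?_ (norm_coeff_mul_rootMoment_le hp hnormp hζ₀ hM hγ0 hγ1 hc hN n)
    simp only [norm_mul, norm_pow, norm_sub_rev b a]
    ring
  calc (p : ℝ) ^ N * ‖∑' n, _‖ ≤ (p : ℝ) ^ N * (asumBound p M γ (p ^ N) / (p ^ N : ℕ)) := by
        gcongr
        exact norm_tsum_le_of_forall_le_of_nonneg (le_trans (norm_nonneg _) (hterm 0)) hterm
    _ = asumBound p M γ (p ^ N) := by
        rw [Nat.cast_pow, mul_div_cancel₀ _ (pow_ne_zero _ (by exact_mod_cast hp.ne_zero))]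

end Estimates

theorem stmt_6_general (p : ℕ) [Fact (Nat.Prime p)]
    (K : Type*) [NormedField K] [CompleteSpace K] [IsAlgClosed K] [IsUltrametricDist K]
    [Algebra ℚ_[p] K] (hKext : ∀ q : ℚ_[p], ‖algebraMap ℚ_[p] K q‖ = ‖q‖)
    (a b : K) (hR : 0 < ‖a - b‖) (c : ℕ → K)
    (β : ℝ) (hβ : β < 1 / 2) (hc : Controlled K c ‖a - b‖ β)
    (Φ : Set PathSeq) (hΦ : Interlocked Φ) :
    HasIntegral p K a b
      (fun x => ∑' n : ℕ, ((n : K) + 1) * c (n + 1) * (x - b) ^ n) Φ 0 := by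
  have hp : p.Prime := Fact.out
  have hnormp : ‖(p : K)‖ = (p : ℝ)⁻¹ := by
    rw [← map_natCast (algebraMap ℚ_[p] K) p, hKext, Padic.norm_p]
  have : CharZero K := charZero_of_injective_algebraMap (algebraMap ℚ_[p] K).injective
  obtain ⟨M, n₀, hM, hcM⟩ := hc.exists_bound hR.le
  have hm : Tendsto (p ^ ·) atTop atTop := tendsto_pow_atTop_atTop_of_one_lt hp.one_lt
  have hbound := tendsto_asumBound (P := p) (M := M) (by exact_mod_cast hp.one_lt)
    (max_lt hβ one_half_pos)
  refine hasIntegral_of_tendsto hΦ.1 (squeeze_zero_norm' ?_ (hbound.comp hm))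
  filter_upwards [hm.eventually_gt_atTop ⌈n₀⌉₊] with N hN
  have : NeZero ((p ^ N : ℕ) : K) := ⟨by exact_mod_cast (pow_pos hp.pos N).ne'⟩
  obtain ⟨ζ₀, hζ₀⟩ := HasEnoughRootsOfUnity.exists_primitiveRoot K (p ^ N)
  exact norm_asum_derivSeries_le hp hnormp hζ₀ hR hM (le_max_right _ _)
    (max_le (by linarith) zero_le_one) hcM (by exact_mod_cast Nat.lt_of_ceil_lt hN)

/-- If `f(x) = ∑ c_n (x-b)^n` is holomorphic on `𝒜(a,b)` with controlled
coefficients of order `β < 1/2`, then the termwise derivative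
`f'(x) = ∑ (n+1) c_{n+1} (x-b)^n` has `∫_{𝒜(a,b),Φ} f'(x) dx = 0` for every interlocked
family `Φ`. -/
theorem stmt_6 (p : ℕ) [Fact (Nat.Prime p)] (hp2 : p ≠ 2)
    (K : Type*) [NormedField K] [CompleteSpace K] [IsAlgClosed K] [IsUltrametricDist K]
    [Algebra ℚ_[p] K] (hKext : ∀ q : ℚ_[p], ‖algebraMap ℚ_[p] K q‖ = ‖q‖)
    (a b : K) (hR : 0 < ‖a - b‖) (c : ℕ → K) (f : K → K)
    (hf : HolomorphicOn' K c b f (arc K a b))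
    (β : ℝ) (hβ0 : 0 ≤ β) (hβ : β < 1 / 2) (hc : Controlled K c ‖a - b‖ β)
    (Φ : Set PathSeq) (hΦ : Interlocked Φ) :
    HasIntegral p K a b
      (fun x => ∑' n : ℕ, ((n : K) + 1) * c (n + 1) * (x - b) ^ n) Φ 0 :=
  stmt_6_general p K hKext a b hR c β hβ hc Φ hΦ
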